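/- Let X be a set with a right self-distributive binary operation ▷. For n ≥ 1 and 0 ≤ i ≤ n define d_{i,n} : X^{n+1} → X^n by d_{i,n}(x_0, x_1, …, x_n) = (x_0 ▷ x_i, x_1 ▷ x_i, …, x_{i−1} ▷ x_i, x_{i+1}, …, x_n) (so d_{0,n}(x_0, …, x_n) = (x_1, …, x_n)). Then for all 0 ≤ i < j ≤ n one has d_{i,n−1} ∘ d_{j,n} = d_{j−1,n−1} ∘ d_{i,n}; that is, (X^{n+1}, d_i) is a presimplicial set. -/

import Mathlib

/-
At a position `k < i` the two composites are `(x_k ▷ x_j) ▷ (x_i ▷ x_j)` and `(x_k ▷ x_i) ▷ x_j`,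
which agree by right self-distributivity; at `k ≥ i` both are `x_{k+1} ▷ x_j` when `k + 1 < j`
and `x_{k+2}` otherwise.
-/

/-- The face map `d_{i,n} : X^{n+1} → X^n` of a right self-distributive structure:
`d_{i,n}(x_0, …, x_n) = (x_0 ▷ x_i, …, x_{i-1} ▷ x_i, x_{i+1}, …, x_n)`. -/
def distribFace {X : Type*} (op : X → X → X) (n : ℕ) (i : Fin (n + 1))
    (x : Fin (n + 1) → X) : Fin n → X :=
  fun j => if (j : ℕ) < (i : ℕ) then op (x j.castSucc) (x i) else x j.succ

section DistribFace

variable {X : Type*} (op : X → X → X) {n : ℕ} (i : Fin (n + 1)) (x : Fin (n + 1) → X)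

theorem distribFace_apply_of_lt {k : Fin n} (hk : (k : ℕ) < i) :
    distribFace op n i x k = op (x k.castSucc) (x i) :=
  if_pos hk

theorem distribFace_apply_of_le {k : Fin n} (hk : (i : ℕ) ≤ k) :
    distribFace op n i x k = x k.succ :=
  if_neg (Nat.not_lt.mpr hk)

end DistribFace

/-- **One-term distributive face maps form a presimplicial set.**
If `▷` is right self-distributive then `d_{i,n-1} ∘ d_{j,n} = d_{j-1,n-1} ∘ d_{i,n}`
for all `0 ≤ i < j ≤ n`. (Here `distribFace op (n+1) j : X^{n+2} → X^{n+1}` plays the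
role of `d_{j,n+1}` and `distribFace op n i : X^{n+1} → X^n` the role of `d_{i,n}`.) -/
theorem distribFace_presimplicial {X : Type*} (op : X → X → X)
    (hop : ∀ a b c : X, op (op a b) c = op (op a c) (op b c)) :
    ∀ (n : ℕ) (i : Fin (n + 1)) (j : Fin (n + 2)), (i : ℕ) < (j : ℕ) →
      (distribFace op n i) ∘ (distribFace op (n + 1) j) =
        (distribFace op n ⟨(j : ℕ) - 1, by have := j.isLt; omega⟩) ∘
          (distribFace op (n + 1) ⟨(i : ℕ), by have := i.isLt; omega⟩) := by
  intro n i j hij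
  funext x k
  set i' : Fin (n + 2) := ⟨(i : ℕ), by have := i.isLt; omega⟩
  set j' : Fin (n + 1) := ⟨(j : ℕ) - 1, by have := j.isLt; omega⟩
  have hij' : (i' : ℕ) ≤ j' := by simp only [i', j']; omega
  have hj' : distribFace op (n + 1) i' x j' = x j := by
    rw [distribFace_apply_of_le op i' x hij']
    exact congrArg x (Fin.ext (by simp only [j', Fin.val_succ]; omega))
  simp only [Function.comp_apply]
  rcases lt_or_ge (k : ℕ) i with hki | hik
  · rw [distribFace_apply_of_lt op i _ hki,
      distribFace_apply_of_lt op j' _ (by simp only [j']; omega),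
      distribFace_apply_of_lt op j _ (by simpa using hki.trans hij),
      distribFace_apply_of_lt op j _ (by simpa using hij), hj',
      distribFace_apply_of_lt op i' _ (by simpa using hki)]
    exact (hop _ _ _).symm
  rw [distribFace_apply_of_le op i _ hik]
  rcases lt_or_ge (k : ℕ) j' with hkj | hjk
  · rw [distribFace_apply_of_lt op j' _ hkj, hj',
      distribFace_apply_of_lt op j _ (by simp only [j', Fin.val_succ] at hkj ⊢; omega),
      distribFace_apply_of_le op i' _ (by simpa using hik)]
    rfl
  · rw [distribFace_apply_of_le op j' _ hjk,
      distribFace_apply_of_le op j _ (by simp only [j', Fin.val_succ] at hjk ⊢; omega),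
      distribFace_apply_of_le op i' _ (by simp only [i', Fin.val_succ]; omega)]
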